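/- arXiv:2203.07475 — 5 statements merged into one kernel-verified Lean document; each statement's English description precedes it below -/
import Mathlib

section
/- Potential shaping leaves the advantage function invariant: if R' is produced by potential shaping of R with any potential function Φ, then for any policy π, the advantage function under R' equals the advantage function under R, i.e. A'^π(s,a) = A^π(s,a) for all s, a. -/
/-!
Shaping with a potential `Φ` changes the Bellman equation only by terms that telescope: since `π`
and `τ` are stochastic, `Q - Φ` solves the shaped equation whenever `Q` solves the original one.
The Bellman equation has a unique solution, because the difference of two solutions is a fixed
point of `γ` times a stochastic averaging operator, which is a strict contraction in the sup norm.
Hence `Q' = Q - Φ` and `V' = V - Φ`, and `Φ` cancels in the advantage `Q' - V' = Q - V`.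
-/

open Finset

theorem abs_sum_mul_le_of_stochastic {ι : Type*} [Fintype ι] {w f : ι → ℝ} {M : ℝ}
    (hw0 : ∀ i, 0 ≤ w i) (hw1 : ∑ i, w i = 1) (hf : ∀ i, |f i| ≤ M) :
    |∑ i, w i * f i| ≤ M :=
  calc |∑ i, w i * f i| ≤ ∑ i, |w i * f i| := abs_sum_le_sum_abs _ _
    _ ≤ ∑ i, w i * M := sum_le_sum fun i _ => by
        rw [abs_mul, abs_of_nonneg (hw0 i)]
        exact mul_le_mul_of_nonneg_left (hf i) (hw0 i)
    _ = M := by rw [← sum_mul, hw1, one_mul]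

namespace MDP

variable {S A : Type*} [Fintype A]

def stateValue (π : S → A → ℝ) (Q : S → A → ℝ) (s : S) : ℝ :=
  ∑ a, π s a * Q s a

theorem stateValue_sub_potential {π : S → A → ℝ} (hπ1 : ∀ s, ∑ a, π s a = 1)
    (Q : S → A → ℝ) (Φ : S → ℝ) (s : S) :
    stateValue π (fun s a => Q s a - Φ s) s = stateValue π Q s - Φ s := by
  simp only [stateValue, mul_sub, sum_sub_distrib, ← sum_mul, hπ1, one_mul]

theorem stateValue_sub (π : S → A → ℝ) (Q₁ Q₂ : S → A → ℝ) (s : S) :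
    stateValue π (Q₁ - Q₂) s = stateValue π Q₁ s - stateValue π Q₂ s := by
  simp only [stateValue, Pi.sub_apply, mul_sub, sum_sub_distrib]

variable [Fintype S]

def bellmanOp (γ : ℝ) (τ : S → A → S → ℝ) (π : S → A → ℝ) (R : S → A → S → ℝ)
    (Q : S → A → ℝ) (s : S) (a : A) : ℝ :=
  ∑ s', τ s a s' * (R s a s' + γ * stateValue π Q s')

theorem bellmanOp_sub (γ : ℝ) (τ : S → A → S → ℝ) (π : S → A → ℝ) (R : S → A → S → ℝ)
    (Q₁ Q₂ : S → A → ℝ) (s : S) (a : A) :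
    bellmanOp γ τ π R Q₁ s a - bellmanOp γ τ π R Q₂ s a =
      γ * ∑ s', τ s a s' * stateValue π (Q₁ - Q₂) s' := by
  simp only [bellmanOp, stateValue_sub, ← sum_sub_distrib, mul_sum]
  exact sum_congr rfl fun s' _ => by ring

theorem eq_zero_of_homogeneous_bellman {γ : ℝ} (hγ0 : 0 ≤ γ) (hγ1 : γ < 1)
    {τ : S → A → S → ℝ} (hτ0 : ∀ s a s', 0 ≤ τ s a s') (hτ1 : ∀ s a, ∑ s', τ s a s' = 1)
    {π : S → A → ℝ} (hπ0 : ∀ s a, 0 ≤ π s a) (hπ1 : ∀ s, ∑ a, π s a = 1) {D : S → A → ℝ}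
    (hD : ∀ s a, D s a = γ * ∑ s', τ s a s' * stateValue π D s') :
    D = 0 := by
  have hle_norm : ∀ s a, |D s a| ≤ ‖D‖ := fun s a =>
    (Real.norm_eq_abs _ ▸ norm_le_pi_norm (D s) a).trans (norm_le_pi_norm D s)
  have hcontract : ∀ s a, |D s a| ≤ γ * ‖D‖ := fun s a => by
    rw [hD, abs_mul, abs_of_nonneg hγ0]
    exact mul_le_mul_of_nonneg_left (abs_sum_mul_le_of_stochastic (hτ0 s a) (hτ1 s a)
      fun s' => abs_sum_mul_le_of_stochastic (hπ0 s') (hπ1 s') (hle_norm s')) hγ0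
  have hnorm : ‖D‖ ≤ γ * ‖D‖ := by
    have hγD : 0 ≤ γ * ‖D‖ := mul_nonneg hγ0 (norm_nonneg D)
    refine (pi_norm_le_iff_of_nonneg hγD).2 fun s => (pi_norm_le_iff_of_nonneg hγD).2 fun a => ?_
    simpa only [Real.norm_eq_abs] using hcontract s a
  exact norm_eq_zero.1 (by nlinarith [norm_nonneg D])

theorem bellman_solution_unique {γ : ℝ} (hγ0 : 0 ≤ γ) (hγ1 : γ < 1)
    {τ : S → A → S → ℝ} (hτ0 : ∀ s a s', 0 ≤ τ s a s') (hτ1 : ∀ s a, ∑ s', τ s a s' = 1)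
    {π : S → A → ℝ} (hπ0 : ∀ s a, 0 ≤ π s a) (hπ1 : ∀ s, ∑ a, π s a = 1)
    {R : S → A → S → ℝ} {Q₁ Q₂ : S → A → ℝ}
    (h₁ : ∀ s a, Q₁ s a = bellmanOp γ τ π R Q₁ s a)
    (h₂ : ∀ s a, Q₂ s a = bellmanOp γ τ π R Q₂ s a) :
    Q₁ = Q₂ :=
  sub_eq_zero.1 <| eq_zero_of_homogeneous_bellman hγ0 hγ1 hτ0 hτ1 hπ0 hπ1 fun s a => by
    rw [Pi.sub_apply, Pi.sub_apply, h₁, h₂, bellmanOp_sub]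

theorem bellmanOp_shaped {γ : ℝ} {τ : S → A → S → ℝ} (hτ1 : ∀ s a, ∑ s', τ s a s' = 1)
    {π : S → A → ℝ} (hπ1 : ∀ s, ∑ a, π s a = 1) {R R' : S → A → S → ℝ} {Φ : S → ℝ}
    (hshape : ∀ s a s', R' s a s' = R s a s' + γ * Φ s' - Φ s) (Q : S → A → ℝ) (s : S) (a : A) :
    bellmanOp γ τ π R' (fun s a => Q s a - Φ s) s a = bellmanOp γ τ π R Q s a - Φ s := by
  have hterm : ∀ s', τ s a s' * (R' s a s' + γ * stateValue π (fun s a => Q s a - Φ s) s') =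
      τ s a s' * (R s a s' + γ * stateValue π Q s') - τ s a s' * Φ s := fun s' => by
    rw [stateValue_sub_potential hπ1, hshape]
    ring
  simp only [bellmanOp, hterm, sum_sub_distrib, ← sum_mul, hτ1, one_mul]

end MDP

open MDP in
/-- Potential shaping leaves the advantage function invariant:
`A'^π(s,a) = A^π(s,a)` where `A^π(s,a) = Q^π(s,a) − V^π(s)` and
`V^π(s) = E_{A∼π(s)}[Q^π(s,A)]`. -/
theorem shaping_preserves_advantage {S A : Type*} [Fintype S] [Fintype A]
    (γ : ℝ) (hγ0 : 0 < γ) (hγ1 : γ < 1)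
    (τ : S → A → S → ℝ) (hτ0 : ∀ s a s', 0 ≤ τ s a s')
    (hτ1 : ∀ s a, ∑ s', τ s a s' = 1)
    (π : S → A → ℝ) (hπ0 : ∀ s a, 0 ≤ π s a) (hπ1 : ∀ s, ∑ a, π s a = 1)
    (R R' : S → A → S → ℝ) (Φ : S → ℝ)
    (hshape : ∀ s a s', R' s a s' = R s a s' + γ * Φ s' - Φ s)
    (Q Q' : S → A → ℝ)
    (hQ : ∀ s a, Q s a = ∑ s', τ s a s' * (R s a s' + γ * ∑ a', π s' a' * Q s' a'))
    (hQ' : ∀ s a, Q' s a = ∑ s', τ s a s' * (R' s a s' + γ * ∑ a', π s' a' * Q' s' a')) :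
    ∀ s a, Q' s a - (∑ a', π s a' * Q' s a') = Q s a - (∑ a', π s a' * Q s a') := by
  have hshifted : Q' = fun s a => Q s a - Φ s :=
    bellman_solution_unique hγ0.le hγ1 hτ0 hτ1 hπ0 hπ1 hQ' fun s a =>
      (congrArg (· - Φ s) (hQ s a)).trans (bellmanOp_shaped hτ1 hπ1 hshape Q s a).symm
  intro s a
  have hvalue := stateValue_sub_potential hπ1 Q Φ s
  simp only [stateValue] at hvalue
  rw [hshifted, hvalue]
  ring
end

section
/- The Q-function determines the expected one-step reward and vice versa: for a fixed policy π, two reward functions R₁ and R₂ yield the same Q-function Q^π if and only if E_{S'∼τ(s,a)}[R₁(s,a,S')] = E_{S'∼τ(s,a)}[R₂(s,a,S')] for all states s and actions a (i.e. R₂ is produced from R₁ by S'-redistribution). -/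
/-!
Both Bellman equations split as `Q = r + γ • P Q`, where `r s a = ∑ s', τ s a s' * R s a s'` is
the expected one-step reward and `P` averages `Q` over the next state and action. If `Q₁ = Q₂`,
the `P`-terms cancel and the expected rewards agree. Conversely, equal expected rewards give
`Q₁ - Q₂ = γ • P (Q₁ - Q₂)`; as `P` averages with probability weights it does not increase the sup
norm, so `‖Q₁ - Q₂‖ ≤ γ ‖Q₁ - Q₂‖` with `γ < 1`, whence `Q₁ = Q₂`.
-/

open Finset

theorem abs_sum_mul_le_of_sum_eq_one {ι : Type*} (s : Finset ι) {w f : ι → ℝ} {M : ℝ}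
    (hw0 : ∀ i ∈ s, 0 ≤ w i) (hw1 : ∑ i ∈ s, w i = 1) (hf : ∀ i ∈ s, |f i| ≤ M) :
    |∑ i ∈ s, w i * f i| ≤ M :=
  calc |∑ i ∈ s, w i * f i|
      ≤ ∑ i ∈ s, |w i * f i| := abs_sum_le_sum_abs _ _
    _ ≤ ∑ i ∈ s, w i * M := sum_le_sum fun i hi => by
        rw [abs_mul, abs_of_nonneg (hw0 i hi)]
        exact mul_le_mul_of_nonneg_left (hf i hi) (hw0 i hi)
    _ = M := by rw [← sum_mul, hw1, one_mul]

namespace MDP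

variable {S A : Type*} [Fintype S] [Fintype A]

def expectedReward (τ : S → A → S → ℝ) (R : S → A → S → ℝ) : S → A → ℝ :=
  fun s a => ∑ s', τ s a s' * R s a s'

def nextValue (τ : S → A → S → ℝ) (π : S → A → ℝ) (Q : S → A → ℝ) : S → A → ℝ :=
  fun s a => ∑ s', τ s a s' * ∑ a', π s' a' * Q s' a'

theorem nextValue_sub (τ : S → A → S → ℝ) (π : S → A → ℝ) (Q₁ Q₂ : S → A → ℝ) :
    nextValue τ π (Q₁ - Q₂) = nextValue τ π Q₁ - nextValue τ π Q₂ := by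
  funext s a
  simp only [nextValue, Pi.sub_apply, mul_sub, sum_sub_distrib]

theorem abs_apply_le_norm (Q : S → A → ℝ) (s : S) (a : A) : |Q s a| ≤ ‖Q‖ :=
  (norm_le_pi_norm (Q s) a).trans (norm_le_pi_norm Q s)

theorem norm_nextValue_le {τ : S → A → S → ℝ} (hτ0 : ∀ s a s', 0 ≤ τ s a s')
    (hτ1 : ∀ s a, ∑ s', τ s a s' = 1) {π : S → A → ℝ} (hπ0 : ∀ s a, 0 ≤ π s a)
    (hπ1 : ∀ s, ∑ a, π s a = 1) (Q : S → A → ℝ) :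
    ‖nextValue τ π Q‖ ≤ ‖Q‖ :=
  (pi_norm_le_iff_of_nonneg (norm_nonneg Q)).2 fun s =>
    (pi_norm_le_iff_of_nonneg (norm_nonneg Q)).2 fun a => by
      rw [Real.norm_eq_abs]
      exact abs_sum_mul_le_of_sum_eq_one _ (fun s' _ => hτ0 s a s') (hτ1 s a) fun s' _ =>
        abs_sum_mul_le_of_sum_eq_one _ (fun a' _ => hπ0 s' a') (hπ1 s') fun a' _ =>
          abs_apply_le_norm Q s' a'

theorem eq_expectedReward_add_nextValue {γ : ℝ} {τ : S → A → S → ℝ} {π : S → A → ℝ}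
    {R : S → A → S → ℝ} {Q : S → A → ℝ}
    (hQ : ∀ s a, Q s a = ∑ s', τ s a s' * (R s a s' + γ * ∑ a', π s' a' * Q s' a')) :
    Q = expectedReward τ R + γ • nextValue τ π Q := by
  funext s a
  rw [hQ s a]
  simp only [expectedReward, nextValue, Pi.add_apply, Pi.smul_apply, smul_eq_mul]
  rw [mul_sum, ← sum_add_distrib]
  exact sum_congr rfl fun _ _ => by ring

end MDP

open MDP

/-- For a fixed policy `π`, two reward functions yield the same
Q-function iff they have the same expected one-step reward for every `(s,a)`
(i.e. one is produced from the other by S'-redistribution). -/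
theorem Q_eq_iff_sprime_redistribution {S A : Type*} [Fintype S] [Fintype A]
    (γ : ℝ) (hγ0 : 0 < γ) (hγ1 : γ < 1)
    (τ : S → A → S → ℝ) (hτ0 : ∀ s a s', 0 ≤ τ s a s')
    (hτ1 : ∀ s a, ∑ s', τ s a s' = 1)
    (π : S → A → ℝ) (hπ0 : ∀ s a, 0 ≤ π s a) (hπ1 : ∀ s, ∑ a, π s a = 1)
    (R₁ R₂ : S → A → S → ℝ) (Q₁ Q₂ : S → A → ℝ)
    (hQ₁ : ∀ s a, Q₁ s a = ∑ s', τ s a s' * (R₁ s a s' + γ * ∑ a', π s' a' * Q₁ s' a'))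
    (hQ₂ : ∀ s a, Q₂ s a = ∑ s', τ s a s' * (R₂ s a s' + γ * ∑ a', π s' a' * Q₂ s' a')) :
    Q₁ = Q₂ ↔
      ∀ s a, ∑ s', τ s a s' * R₁ s a s' = ∑ s', τ s a s' * R₂ s a s' := by
  have hQ₁' := eq_expectedReward_add_nextValue hQ₁
  have hQ₂' := eq_expectedReward_add_nextValue hQ₂
  constructor
  · rintro rfl s a
    exact congrFun₂ (add_right_cancel (hQ₁'.symm.trans hQ₂')) s a
  · intro hR
    replace hR : expectedReward τ R₁ = expectedReward τ R₂ := funext₂ hR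
    have hfix : Q₁ - Q₂ = γ • nextValue τ π (Q₁ - Q₂) := by
      calc Q₁ - Q₂
          = (expectedReward τ R₁ + γ • nextValue τ π Q₁)
              - (expectedReward τ R₂ + γ • nextValue τ π Q₂) := by rw [← hQ₁', ← hQ₂']
        _ = γ • nextValue τ π (Q₁ - Q₂) := by rw [hR, nextValue_sub, smul_sub]; abel
    have hcontract : ‖Q₁ - Q₂‖ ≤ γ * ‖Q₁ - Q₂‖ := by
      conv_lhs => rw [hfix, norm_smul, Real.norm_of_nonneg hγ0.le]
      gcongr
      exact norm_nextValue_le hτ0 hτ1 hπ0 hπ1 _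
    have hnorm : ‖Q₁ - Q₂‖ = 0 := by nlinarith [norm_nonneg (Q₁ - Q₂)]
    exact sub_eq_zero.mp (norm_eq_zero.mp hnorm)
end

section
/- Optimality-preserving transformations preserve the set of optimal actions: if R' is produced from R by an optimality-preserving transformation with O(s) = argmax_a A*(s,a) for all s (where A* is the optimal advantage under R), then the bounding function Ψ equals the optimal value function V*' of the MDP with reward R', and the set of optimal actions in every state under R' equals O(s). -/
/-!
Both `Ψ` and `V'` solve the Bellman optimality equation for `R'`: `V'` by assumption, and `Ψ`
because its inequality is tight exactly on `argmax_a Astar(s, a)`, which is nonempty as there are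
finitely many actions. The Bellman operator is monotone and a `γ`-contraction in the sup norm, so
a subsolution lies below a supersolution; applied in both directions this gives `Ψ = V'`, and the
characterisation of the tight actions for `Ψ` transfers to `V'`.
-/

open Finset

section Bellman

variable {S A : Type*} [Fintype S]

noncomputable def actionValue (τ : S → A → S → ℝ) (R : S → A → S → ℝ) (γ : ℝ) (V : S → ℝ)
    (s : S) (a : A) : ℝ :=
  ∑ s', τ s a s' * (R s a s' + γ * V s')

variable {τ : S → A → S → ℝ} {R : S → A → S → ℝ} {γ : ℝ}

theorem actionValue_sub_actionValue_le (hτ0 : ∀ s a s', 0 ≤ τ s a s')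
    (hτ1 : ∀ s a, ∑ s', τ s a s' = 1) (hγ : 0 ≤ γ) {V W : S → ℝ} {c : ℝ}
    (hc : ∀ s, V s - W s ≤ c) (s : S) (a : A) :
    actionValue τ R γ V s a - actionValue τ R γ W s a ≤ γ * c :=
  calc actionValue τ R γ V s a - actionValue τ R γ W s a
      = γ * ∑ s', τ s a s' * (V s' - W s') := by
        simp only [actionValue, ← sum_sub_distrib, mul_sum]
        exact sum_congr rfl fun _ _ => by ring
    _ ≤ γ * ∑ s', τ s a s' * c := by
        gcongr with s' _
        exacts [hτ0 s a s', hc s']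
    _ = γ * c := by rw [← sum_mul, hτ1, one_mul]

theorem le_of_bellman_subsolution_of_supersolution (hτ0 : ∀ s a s', 0 ≤ τ s a s')
    (hτ1 : ∀ s a, ∑ s', τ s a s' = 1) (hγ0 : 0 ≤ γ) (hγ1 : γ < 1) {V W : S → ℝ}
    (hV : ∀ s, ∃ a, V s ≤ actionValue τ R γ V s a)
    (hW : ∀ s a, actionValue τ R γ W s a ≤ W s) : V ≤ W := by
  intro s
  have : Nonempty S := ⟨s⟩
  obtain ⟨s₀, hs₀⟩ := Finite.exists_max fun s => V s - W s
  obtain ⟨a, ha⟩ := hV s₀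
  have hcontract := actionValue_sub_actionValue_le (R := R) hτ0 hτ1 hγ0 hs₀ s₀ a
  have hmax_nonpos : V s₀ - W s₀ ≤ 0 := by nlinarith [hW s₀ a]
  linarith [hs₀ s]

end Bellman

theorem opt_preserving_transformation_preserves_optimal_actions_general
    {S A : Type*} [Fintype S] [Fintype A] [Nonempty A]
    (γ : ℝ) (hγ0 : 0 < γ) (hγ1 : γ < 1)
    (τ : S → A → S → ℝ) (hτ0 : ∀ s a s', 0 ≤ τ s a s')
    (hτ1 : ∀ s a, ∑ s', τ s a s' = 1)
    (R' : S → A → S → ℝ)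
    -- optimal value function of `R`, and its optimal advantage
    (Astar : S → A → ℝ)
    -- optimal value function of `R'`
    (V' : S → ℝ)
    (hV'le : ∀ s a, (∑ s', τ s a s' * (R' s a s' + γ * V' s')) ≤ V' s)
    (hV'ex : ∀ s, ∃ a, (∑ s', τ s a s' * (R' s a s' + γ * V' s')) = V' s)
    -- the optimality-preserving transformation with `O(s) = argmax_a Astar(s,a)`
    (Ψ : S → ℝ)
    (hΨle : ∀ s a, (∑ s', τ s a s' * (R' s a s' + γ * Ψ s')) ≤ Ψ s)
    (hΨeq : ∀ s a, (∑ s', τ s a s' * (R' s a s' + γ * Ψ s')) = Ψ s ↔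
      ∀ a', Astar s a' ≤ Astar s a) :
    (∀ s, Ψ s = V' s) ∧
    (∀ s a, (∑ s', τ s a s' * (R' s a s' + γ * V' s')) = V' s ↔
      ∀ a', Astar s a' ≤ Astar s a) := by
  have hΨex : ∀ s, ∃ a, Ψ s ≤ actionValue τ R' γ Ψ s a := fun s =>
    let ⟨a, ha⟩ := Finite.exists_max (Astar s)
    ⟨a, ((hΨeq s a).2 ha).ge⟩
  have hV'ex' : ∀ s, ∃ a, V' s ≤ actionValue τ R' γ V' s a := fun s =>
    let ⟨a, ha⟩ := hV'ex s
    ⟨a, ha.ge⟩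
  have hΨV' : Ψ = V' := le_antisymm
    (le_of_bellman_subsolution_of_supersolution hτ0 hτ1 hγ0.le hγ1 hΨex hV'le)
    (le_of_bellman_subsolution_of_supersolution hτ0 hτ1 hγ0.le hγ1 hV'ex' hΨle)
  subst hΨV'
  exact ⟨fun _ => rfl, hΨeq⟩

/-- Optimality-preserving transformations preserve the set of
optimal actions.  Here `Vstar` is the optimal value function of the original
reward `R` (with `Astar` its optimal advantage), `V'` is the optimal value
function of `R'`, and `Ψ` is the bounding function of an optimality-preserving
transformation with `O(s) = argmax_a Astar(s,a)`.  Then `Ψ = V'` and the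
optimal actions under `R'` are exactly `O(s)` in every state. -/
theorem opt_preserving_transformation_preserves_optimal_actions
    {S A : Type*} [Fintype S] [Fintype A] [Nonempty A]
    (γ : ℝ) (hγ0 : 0 < γ) (hγ1 : γ < 1)
    (τ : S → A → S → ℝ) (hτ0 : ∀ s a s', 0 ≤ τ s a s')
    (hτ1 : ∀ s a, ∑ s', τ s a s' = 1)
    (R R' : S → A → S → ℝ)
    -- optimal value function of `R`, and its optimal advantage
    (Vstar : S → ℝ)
    (hVle : ∀ s a, (∑ s', τ s a s' * (R s a s' + γ * Vstar s')) ≤ Vstar s)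
    (hVex : ∀ s, ∃ a, (∑ s', τ s a s' * (R s a s' + γ * Vstar s')) = Vstar s)
    (Astar : S → A → ℝ)
    (hA : ∀ s a, Astar s a = (∑ s', τ s a s' * (R s a s' + γ * Vstar s')) - Vstar s)
    -- optimal value function of `R'`
    (V' : S → ℝ)
    (hV'le : ∀ s a, (∑ s', τ s a s' * (R' s a s' + γ * V' s')) ≤ V' s)
    (hV'ex : ∀ s, ∃ a, (∑ s', τ s a s' * (R' s a s' + γ * V' s')) = V' s)
    -- the optimality-preserving transformation with `O(s) = argmax_a Astar(s,a)`
    (Ψ : S → ℝ)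
    (hΨle : ∀ s a, (∑ s', τ s a s' * (R' s a s' + γ * Ψ s')) ≤ Ψ s)
    (hΨeq : ∀ s a, (∑ s', τ s a s' * (R' s a s' + γ * Ψ s')) = Ψ s ↔
      ∀ a', Astar s a' ≤ Astar s a) :
    (∀ s, Ψ s = V' s) ∧
    (∀ s a, (∑ s', τ s a s' * (R' s a s' + γ * V' s')) = V' s ↔
      ∀ a', Astar s a' ≤ Astar s a) :=
  opt_preserving_transformation_preserves_optimal_actions_general γ hγ0 hγ1 τ hτ0 hτ1 R' Astar V'
    hV'le hV'ex Ψ hΨle hΨeq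
end

section
/- Matching optimal action sets imply an optimality-preserving transformation: if two reward functions R and R' on the same MDP induce the same set of optimal actions argmax_a A*(s,a) in every state s, then R' is produced from R by an optimality-preserving transformation with O(s) = argmax_a A*(s,a), witnessed by Ψ = V*', the optimal value function under R'. -/
/-! Under `R'` the advantage `A₂ = Q' - V'` is nonpositive and vanishes at some action, by the
Bellman equation for `V'`. Hence its maximisers are exactly the actions with `Q'(s, a) = V'(s)`,
and by hypothesis these are also the maximisers of `A₁`. -/

theorem eq_iff_forall_le_of_forall_le_of_exists_eq {ι α : Type*} [PartialOrder α] {f : ι → α}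
    {v : α} (hle : ∀ i, f i ≤ v) (hex : ∃ i, f i = v) (i : ι) :
    f i = v ↔ ∀ j, f j ≤ f i := by
  refine ⟨fun h j => h ▸ hle j, fun hmax => le_antisymm (hle i) ?_⟩
  obtain ⟨j, rfl⟩ := hex
  exact hmax j

theorem matching_optimal_actions_implies_opt_preserving_general
    {S A : Type*} [Fintype S]
    (γ : ℝ)
    (τ : S → A → S → ℝ)
    (R' : S → A → S → ℝ)
    (A₁ : S → A → ℝ)
    (V' : S → ℝ)
    (hV'le : ∀ s a, (∑ s', τ s a s' * (R' s a s' + γ * V' s')) ≤ V' s)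
    (hV'ex : ∀ s, ∃ a, (∑ s', τ s a s' * (R' s a s' + γ * V' s')) = V' s)
    (A₂ : S → A → ℝ)
    (hA₂ : ∀ s a, A₂ s a = (∑ s', τ s a s' * (R' s a s' + γ * V' s')) - V' s)
    -- matching sets of optimal actions in every state
    (hmatch : ∀ s a, (∀ a', A₁ s a' ≤ A₁ s a) ↔ (∀ a', A₂ s a' ≤ A₂ s a)) :
    ∀ s a, (∑ s', τ s a s' * (R' s a s' + γ * V' s')) ≤ V' s ∧
      ((∑ s', τ s a s' * (R' s a s' + γ * V' s')) = V' s ↔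
        ∀ a', A₁ s a' ≤ A₁ s a) := by
  intro s a
  refine ⟨hV'le s a, ?_⟩
  rw [hmatch s a, eq_iff_forall_le_of_forall_le_of_exists_eq (hV'le s) (hV'ex s) a]
  simp only [hA₂, sub_le_sub_iff_right]

/-- Matching optimal action sets imply an optimality-preserving
transformation: if `R` and `R'` (with optimal value functions `V`, `V'` and
optimal advantages `A₁`, `A₂`) induce the same set of optimal actions
`argmax_a A*(s,a)` in every state, then `R'` is produced from `R` by an
optimality-preserving transformation with `O(s) = argmax_a A*(s,a)`,
witnessed by `Ψ = V'`. -/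
theorem matching_optimal_actions_implies_opt_preserving
    {S A : Type*} [Fintype S] [Fintype A] [Nonempty A]
    (γ : ℝ) (hγ0 : 0 < γ) (hγ1 : γ < 1)
    (τ : S → A → S → ℝ) (hτ0 : ∀ s a s', 0 ≤ τ s a s')
    (hτ1 : ∀ s a, ∑ s', τ s a s' = 1)
    (R R' : S → A → S → ℝ)
    (V : S → ℝ)
    (hVle : ∀ s a, (∑ s', τ s a s' * (R s a s' + γ * V s')) ≤ V s)
    (hVex : ∀ s, ∃ a, (∑ s', τ s a s' * (R s a s' + γ * V s')) = V s)
    (A₁ : S → A → ℝ)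
    (hA₁ : ∀ s a, A₁ s a = (∑ s', τ s a s' * (R s a s' + γ * V s')) - V s)
    (V' : S → ℝ)
    (hV'le : ∀ s a, (∑ s', τ s a s' * (R' s a s' + γ * V' s')) ≤ V' s)
    (hV'ex : ∀ s, ∃ a, (∑ s', τ s a s' * (R' s a s' + γ * V' s')) = V' s)
    (A₂ : S → A → ℝ)
    (hA₂ : ∀ s a, A₂ s a = (∑ s', τ s a s' * (R' s a s' + γ * V' s')) - V' s)
    -- matching sets of optimal actions in every state
    (hmatch : ∀ s a, (∀ a', A₁ s a' ≤ A₁ s a) ↔ (∀ a', A₂ s a' ≤ A₂ s a)) :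
    ∀ s a, (∑ s', τ s a s' * (R' s a s' + γ * V' s')) ≤ V' s ∧
      ((∑ s', τ s a s' * (R' s a s' + γ * V' s')) = V' s ↔
        ∀ a', A₁ s a' ≤ A₁ s a) :=
  matching_optimal_actions_implies_opt_preserving_general γ τ R' A₁ V' hV'le hV'ex A₂ hA₂ hmatch
end

section
/- S'-redistribution can set expected rewards arbitrarily under changed dynamics: given a finite MDP with transition kernel τ and reward R₁, alternative dynamics τ', and any function L : S × A → ℝ, there exists a reward R₂ with E_{S'∼τ(s,a)}[R₂(s,a,S')] = E_{S'∼τ(s,a)}[R₁(s,a,S')] for all (s,a), and E_{S'∼τ'(s,a)}[R₂(s,a,S')] = L(s,a) for every (s,a) with τ(s,a) ≠ τ'(s,a). -/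
open Matrix

/-- The correction is `r = α • (p - q) + β • 1`: the constant direction shifts both
expectations equally, while `p - q` separates them since `(p - q) ⬝ᵥ (p - q) > 0`. -/
theorem exists_dotProduct_eq_of_sum_eq_one {ι : Type*} [Fintype ι] {p q : ι → ℝ}
    (hp : ∑ i, p i = 1) (hq : ∑ i, q i = 1) (hpq : p ≠ q) (a b : ℝ) :
    ∃ r : ι → ℝ, p ⬝ᵥ r = a ∧ q ⬝ᵥ r = b := by
  set d := p - q
  have hd : d ⬝ᵥ d ≠ 0 := fun h => hpq (sub_eq_zero.mp (dotProduct_self_eq_zero.mp h))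
  obtain ⟨α, hα⟩ : ∃ α, α * (d ⬝ᵥ d) = a - b := ⟨_, div_mul_cancel₀ _ hd⟩
  have hpd : p ⬝ᵥ d - q ⬝ᵥ d = d ⬝ᵥ d := (sub_dotProduct p q d).symm
  refine ⟨α • d + (a - α * p ⬝ᵥ d) • 1, ?_, ?_⟩
  · simp only [dotProduct_add, dotProduct_smul, dotProduct_one, hp, smul_eq_mul]
    ring
  · simp only [dotProduct_add, dotProduct_smul, dotProduct_one, hq, smul_eq_mul]
    linear_combination -α * hpd - hα

theorem sprime_redistribution_transfer_general {S A : Type*} [Fintype S]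
    (τ τ' : S → A → S → ℝ)
    (hτ1 : ∀ s a, ∑ s', τ s a s' = 1)
    (hτ'1 : ∀ s a, ∑ s', τ' s a s' = 1)
    (R₁ : S → A → S → ℝ) (L : S → A → ℝ) :
    ∃ R₂ : S → A → S → ℝ,
      (∀ s a, ∑ s', τ s a s' * R₂ s a s' = ∑ s', τ s a s' * R₁ s a s') ∧
      (∀ s a, (fun s' => τ s a s') ≠ (fun s' => τ' s a s') →
        ∑ s', τ' s a s' * R₂ s a s' = L s a) := by
  have hR₂ : ∀ s a, ∃ r : S → ℝ,
      τ s a ⬝ᵥ r = τ s a ⬝ᵥ R₁ s a ∧ (τ s a ≠ τ' s a → τ' s a ⬝ᵥ r = L s a) := by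
    intro s a
    by_cases h : τ s a = τ' s a
    · exact ⟨R₁ s a, rfl, fun h' => absurd h h'⟩
    · obtain ⟨r, hτr, hτ'r⟩ :=
        exists_dotProduct_eq_of_sum_eq_one (hτ1 s a) (hτ'1 s a) h (τ s a ⬝ᵥ R₁ s a) (L s a)
      exact ⟨r, hτr, fun _ => hτ'r⟩
  choose R₂ hτR₂ hτ'R₂ using hR₂
  exact ⟨R₂, hτR₂, hτ'R₂⟩

/-- S'-redistribution can set expected rewards arbitrarily under
changed dynamics: there exists `R₂` agreeing with `R₁` in expectation under
`τ`, whose expectation under `τ'` equals `L(s,a)` wherever `τ(s,a) ≠ τ'(s,a)`. -/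
theorem sprime_redistribution_transfer {S A : Type*} [Fintype S]
    (τ τ' : S → A → S → ℝ)
    (hτ0 : ∀ s a s', 0 ≤ τ s a s') (hτ1 : ∀ s a, ∑ s', τ s a s' = 1)
    (hτ'0 : ∀ s a s', 0 ≤ τ' s a s') (hτ'1 : ∀ s a, ∑ s', τ' s a s' = 1)
    (R₁ : S → A → S → ℝ) (L : S → A → ℝ) :
    ∃ R₂ : S → A → S → ℝ,
      (∀ s a, ∑ s', τ s a s' * R₂ s a s' = ∑ s', τ s a s' * R₁ s a s') ∧
      (∀ s a, (fun s' => τ s a s') ≠ (fun s' => τ' s a s') →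
        ∑ s', τ' s a s' * R₂ s a s' = L s a) :=
  sprime_redistribution_transfer_general τ τ' hτ1 hτ'1 R₁ L
end
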